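/- arXiv:1907.05467 — 9 statements merged into one kernel-verified Lean document; each statement's English description precedes it below -/
import Mathlib

section
/- The square of the 6×6 matrix A = [[3,2,0,0,0,2],[6,3,2,4,0,4],[12,6,3,6,0,8],[0,0,2,3,2,0],[4,0,4,6,3,2],[6,0,8,12,6,3]] has all entries strictly positive. -/
open Matrix

lemma cons_val_five' {α : Type*} {m : ℕ} (x : α) (u : Fin (m+5) → α) :
    vecCons x u 5 = vecHead (vecTail (vecTail (vecTail (vecTail u)))) :=
  rfl

theorem stmt_0 :
    ∀ i j : Fin 6,
      0 < ((!![3,2,0,0,0,2; 6,3,2,4,0,4; 12,6,3,6,0,8; 0,0,2,3,2,0;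
            4,0,4,6,3,2; 6,0,8,12,6,3] : Matrix (Fin 6) (Fin 6) ℚ) ^ 2) i j := by
  intro i j
  fin_cases i <;> fin_cases j <;>
    simp [pow_two, Matrix.mul_apply, Fin.sum_univ_six, cons_val_five'] <;>
    norm_num [Matrix.vecHead, Matrix.vecTail, Function.comp]
end

section
/- The number 9 + 4√5 is an eigenvalue of the 6×6 matrix A = [[3,2,0,0,0,2],[6,3,2,4,0,4],[12,6,3,6,0,8],[0,0,2,3,2,0],[4,0,4,6,3,2],[6,0,8,12,6,3]], i.e. det(A − (9+4√5)·I) = 0. -/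
open Matrix

private lemma c5 {α : Type*} (a : α) (u : Fin 5 → α) : Matrix.vecCons a u 5 = u 4 := rfl
private lemma c4 {α : Type*} (a : α) (u : Fin 4 → α) : Matrix.vecCons a u 4 = u 3 := rfl
private lemma c3 {α : Type*} (a : α) (u : Fin 3 → α) : Matrix.vecCons a u 3 = u 2 := rfl
private lemma c2 {α : Type*} (a : α) (u : Fin 2 → α) : Matrix.vecCons a u 2 = u 1 := rfl

theorem stmt_1 :
    ((!![3,2,0,0,0,2; 6,3,2,4,0,4; 12,6,3,6,0,8; 0,0,2,3,2,0;
        4,0,4,6,3,2; 6,0,8,12,6,3] : Matrix (Fin 6) (Fin 6) ℝ)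
      - (9 + 4 * Real.sqrt 5) • (1 : Matrix (Fin 6) (Fin 6) ℝ)).det = 0 := by
  rw [← Matrix.exists_mulVec_eq_zero_iff]
  set s := Real.sqrt 5 with hs
  have h5 : s * s = 5 := Real.mul_self_sqrt (by norm_num)
  refine ⟨![s-1, s+1, 6, s-1, s+1, 6], ?_, ?_⟩
  · intro h
    have : (6:ℝ) = 0 := by
      have := congrFun h 2
      simpa using this
    norm_num at this
  · funext i
    fin_cases i <;>
      simp [Matrix.mulVec, dotProduct, Fin.sum_univ_six, Matrix.sub_apply,
        Matrix.one_apply, Matrix.smul_apply, c5, c4, c3, c2] <;> nlinarith [h5]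
end

section
/- The polynomial x³ − 15x² + 7x − 1 is irreducible over ℚ and none of its complex roots lie on the unit circle. -/
open Polynomial

theorem stmt_9 :
    Irreducible (X ^ 3 - 15 * X ^ 2 + 7 * X - 1 : ℚ[X]) ∧
    ∀ z : ℂ, z ^ 3 - 15 * z ^ 2 + 7 * z - 1 = 0 → ‖z‖ ≠ 1 := by
  constructor
  · have hdeg : (X ^ 3 - 15 * X ^ 2 + 7 * X - 1 : ℚ[X]).natDegree = 3 := by
      compute_degree!
    rw [irreducible_iff_roots_eq_zero_of_degree_le_three (by omega) (by omega)]
    rw [Multiset.eq_zero_iff_forall_notMem]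
    intro a ha
    have hne : (X ^ 3 - 15 * X ^ 2 + 7 * X - 1 : ℚ[X]) ≠ 0 := fun h => by
      simp [h] at hdeg
    rw [mem_roots hne, IsRoot] at ha
    · have ha' : a ^ 3 - 15 * a ^ 2 + 7 * a - 1 = 0 := by
        simpa using ha
      have hmon : (X ^ 3 - 15 * X ^ 2 + 7 * X - 1 : ℤ[X]).Monic := by
        monicity!
      have haeval : aeval a (X ^ 3 - 15 * X ^ 2 + 7 * X - 1 : ℤ[X]) = 0 := by
        simp only [map_sub, map_add, map_mul, map_pow, aeval_X, map_ofNat, map_one]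
        linear_combination ha'
      obtain ⟨r, hr, hdvd⟩ := exists_integer_of_is_root_of_monic hmon haeval
      have hc0 : (X ^ 3 - 15 * X ^ 2 + 7 * X - 1 : ℤ[X]).coeff 0 = -1 := by
        simp [coeff_sub, coeff_add, coeff_X_pow, coeff_one]
      rw [hc0] at hdvd
      have : IsUnit r := isUnit_of_dvd_one (by simpa using hdvd.neg_right)
      rcases Int.isUnit_iff.mp this with h1 | h1 <;> subst h1 <;>
        rw [hr] at ha' <;> norm_num at ha'
  · intro z hz habs
    have hz0 : z ≠ 0 := by
      intro h; rw [h] at habs; simp at habs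
    have hconj : (starRingEnd ℂ) z ^ 3 - 15 * (starRingEnd ℂ) z ^ 2 +
        7 * (starRingEnd ℂ) z - 1 = 0 := by
      have := congrArg (starRingEnd ℂ) hz
      simpa [map_sub, map_add, map_mul, map_pow, map_ofNat] using this
    have hmul : z * (starRingEnd ℂ) z = 1 := by
      rw [Complex.mul_conj]
      norm_cast
      rw [← Complex.sq_norm, habs]; norm_num
    set w := (starRingEnd ℂ) z with hw
    have key : z * (z + 1) = 0 := by
      linear_combination (-1/8 : ℂ) * hz - z^3/8 * hconj +
        (z^2*w^2 + z*w + 1 - 15*z*(z*w+1) + 7*z^2)/8 * hmul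
    rcases mul_eq_zero.mp key with h | h
    · exact hz0 h
    · have hz1 : z = -1 := by linear_combination h
      rw [hz1] at hz; norm_num at hz
end

section
/- The polynomial q(y) = y³ − 22y² + 124y − 232 is irreducible over ℚ and has exactly one real root (its other two roots are non-real complex numbers). -/
open Polynomial

/-- No integer root of `y^3 - 22y^2 + 124y - 232`. -/
lemma aux_int_no_root (n : ℤ) : n ^ 3 - 22 * n ^ 2 + 124 * n - 232 ≠ 0 := by
  intro h
  rcases le_or_gt n 14 with hn | hn
  · nlinarith [sq_nonneg (n - 4), sq_nonneg (n - 14), sq_nonneg n]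
  · nlinarith [sq_nonneg (n - 15), sq_nonneg n]

/-- Any real root `a` satisfies `3a^2 - 44a + 12 > 0`. -/
lemma aux_real_root_disc {a : ℝ} (h : a ^ 3 - 22 * a ^ 2 + 124 * a - 232 = 0) :
    3 * a ^ 2 - 44 * a + 12 > 0 := by
  by_contra hc
  push_neg at hc
  nlinarith [sq_nonneg (a - 4), sq_nonneg (a - 14), sq_nonneg a, sq_nonneg (a - 13)]

lemma aux_irr : Irreducible (X ^ 3 - 22 * X ^ 2 + 124 * X - 232 : ℚ[X]) := by
  have hdeg : (X ^ 3 - 22 * X ^ 2 + 124 * X - 232 : ℚ[X]).natDegree = 3 := by compute_degree!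
  rw [irreducible_iff_roots_eq_zero_of_degree_le_three (by omega) (by omega)]
  rw [Multiset.eq_zero_iff_forall_notMem]
  intro x hx
  have hne : (X ^ 3 - 22 * X ^ 2 + 124 * X - 232 : ℚ[X]) ≠ 0 := by
    intro h0; rw [h0] at hdeg; simp at hdeg
  rw [mem_roots hne] at hx
  have hx0 : x ^ 3 - 22 * x ^ 2 + 124 * x - 232 = 0 := by
    have := hx
    simpa [IsRoot] using this
  have haev : aeval x (X ^ 3 - 22 * X ^ 2 + 124 * X - 232 : ℤ[X]) = 0 := by
    simp only [map_sub, map_add, map_mul, map_pow, aeval_X, map_ofNat]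
    convert hx0 using 2 <;> norm_num
  obtain ⟨n, hn⟩ := isInteger_of_is_root_of_monic (by monicity!) haev
  have hnx : (n : ℚ) = x := hn
  rw [← hnx] at hx0
  have : (n : ℤ) ^ 3 - 22 * n ^ 2 + 124 * n - 232 = 0 := by exact_mod_cast hx0
  exact aux_int_no_root n this

lemma aux_exu : ∃! r : ℝ, r ^ 3 - 22 * r ^ 2 + 124 * r - 232 = 0 := by
  have hcont : ContinuousOn (fun x : ℝ => x ^ 3 - 22 * x ^ 2 + 124 * x - 232)
      (Set.Icc 14 15) := by fun_prop
  have h0 : (0:ℝ) ∈ Set.Icc ((14:ℝ)^3 - 22*14^2 + 124*14 - 232)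
      ((15:ℝ)^3 - 22*15^2 + 124*15 - 232) := by norm_num
  obtain ⟨r, _, hr⟩ := intermediate_value_Icc (by norm_num : (14:ℝ) ≤ 15) hcont h0
  refine ⟨r, hr, ?_⟩
  intro b hb
  by_contra hne
  have hq : r ^ 2 + (b - 22) * r + (b ^ 2 - 22 * b + 124) = 0 := by
    have hd : (r - b) * (r ^ 2 + (b - 22) * r + (b ^ 2 - 22 * b + 124)) = 0 := by
      linear_combination hr - hb
    rcases mul_eq_zero.mp hd with h | h
    · exact absurd (by linarith [sub_eq_zero.mp h]) hne
    · exact h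
  have hdisc := aux_real_root_disc hb
  nlinarith [sq_nonneg (2 * r + (b - 22)), hdisc]

lemma aux_cpx {r : ℝ} (hr : r ^ 3 - 22 * r ^ 2 + 124 * r - 232 = 0)
    (hd : 3 * r ^ 2 - 44 * r + 12 > 0) :
    ∃ z w : ℂ, z ≠ w ∧ z.im ≠ 0 ∧ w.im ≠ 0 ∧
      z ^ 3 - 22 * z ^ 2 + 124 * z - 232 = 0 ∧
      w ^ 3 - 22 * w ^ 2 + 124 * w - 232 = 0 := by
  set s : ℝ := (22 - r) / 2 with hs
  set t : ℝ := Real.sqrt (3 * r ^ 2 - 44 * r + 12) / 2 with ht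
  have ht0 : 0 < t := by positivity
  have ht2 : t ^ 2 = (3 * r ^ 2 - 44 * r + 12) / 4 := by
    rw [ht, div_pow, Real.sq_sqrt hd.le]; norm_num
  have key : ∀ t' : ℝ, t' ^ 2 = (3 * r ^ 2 - 44 * r + 12) / 4 →
      ((s : ℂ) + t' * Complex.I) ^ 3 - 22 * ((s : ℂ) + t' * Complex.I) ^ 2 +
        124 * ((s : ℂ) + t' * Complex.I) - 232 = 0 := by
    intro t' ht'
    have h1 := congrArg (Complex.ofReal) ht'
    have h3 := congrArg (Complex.ofReal) hr
    push_cast at h1 h3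
    have hsc : ((s : ℂ)) = (22 - r) / 2 := by rw [hs]; push_cast; ring
    rw [hsc]
    linear_combination h3 + ((((22 - (r:ℂ)) / 2 + t' * Complex.I) - r) * Complex.I ^ 2) * h1 +
      ((((22 - (r:ℂ)) / 2 + t' * Complex.I) - r) * ((3 * (r:ℂ) ^ 2 - 44 * r + 12) / 4)) *
        Complex.I_sq
  refine ⟨(s : ℂ) + t * Complex.I, (s : ℂ) + ((-t : ℝ) : ℂ) * Complex.I, ?_, ?_, ?_,
    key t ht2, key (-t) (by rw [neg_pow]; simpa using ht2)⟩
  · intro h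
    have := congrArg Complex.im h
    simp at this
    linarith
  · simp [ht0.ne']
  · simp [ht0.ne']

theorem stmt_11 :
    Irreducible (X ^ 3 - 22 * X ^ 2 + 124 * X - 232 : ℚ[X]) ∧
    (∃! r : ℝ, r ^ 3 - 22 * r ^ 2 + 124 * r - 232 = 0) ∧
    (∃ z w : ℂ, z ≠ w ∧ z.im ≠ 0 ∧ w.im ≠ 0 ∧
      z ^ 3 - 22 * z ^ 2 + 124 * z - 232 = 0 ∧
      w ^ 3 - 22 * w ^ 2 + 124 * w - 232 = 0) := by
  obtain ⟨r, hr, -⟩ := aux_exu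
  exact ⟨aux_irr, aux_exu, aux_cpx hr (aux_real_root_disc hr)⟩
end

section
/- The characteristic polynomial of the 8×8 matrix M = [[3,2,0,0,0,0,0,2],[6,3,2,4,0,0,0,4],[12,6,3,6,0,0,0,8],[0,0,2,3,2,0,0,0],[0,0,4,6,3,2,0,0],[0,0,8,12,6,3,2,0],[4,0,16,24,12,6,3,2],[6,0,32,48,24,12,6,3]] equals (x+1)⁴(x⁴ − 28x³ + 6x² − 28x + 1). -/
set_option maxRecDepth 10000
set_option maxHeartbeats 1000000

open Matrix Polynomial

private def Mm : Matrix (Fin 8) (Fin 8) ℚ :=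
  !![3,2,0,0,0,0,0,2; 6,3,2,4,0,0,0,4; 12,6,3,6,0,0,0,8; 0,0,2,3,2,0,0,0;
     0,0,4,6,3,2,0,0; 0,0,8,12,6,3,2,0; 4,0,16,24,12,6,3,2; 6,0,32,48,24,12,6,3]

private def Pm : Matrix (Fin 8) (Fin 8) ℚ :=
  !![-1,0,0,0,1,0,0,0; 0,-1,0,0,0,1,0,0; 0,0,3,-2,0,0,1,0; 0,0,-2,1,0,0,0,1;
     1,0,0,0,0,0,0,0; 0,1,0,0,0,0,0,0; 0,0,1,0,0,0,0,0; 0,0,0,1,0,0,0,0]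

private def Qm : Matrix (Fin 8) (Fin 8) ℚ :=
  !![0,0,0,0,1,0,0,0; 0,0,0,0,0,1,0,0; 0,0,0,0,0,0,1,0; 0,0,0,0,0,0,0,1;
     1,0,0,0,1,0,0,0; 0,1,0,0,0,1,0,0; 0,0,1,0,0,0,-3,2; 0,0,0,1,0,0,2,-1]

private def Tm : Matrix (Fin 8) (Fin 8) ℚ :=
  !![3,2,0,-2,0,0,4,6; 6,3,2,-4,0,0,8,12; 8,6,3,-6,4,0,16,24; 18,12,6,-13,6,0,32,48;
     0,0,0,0,3,2,4,6; 0,0,0,0,6,3,10,16; 0,0,0,0,12,6,19,30; 0,0,0,0,2,0,2,3]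

private lemma hPQ : Pm * Qm = 1 := by
  ext i j
  rw [Matrix.mul_apply]
  fin_cases i <;> fin_cases j <;>
    norm_num [Pm, Qm, Fin.sum_univ_succ, Matrix.one_apply, Fin.ext_iff]

private lemma hMP : Mm * Pm = Pm * Tm := by
  ext i j
  rw [Matrix.mul_apply, Matrix.mul_apply]
  fin_cases i <;> fin_cases j <;>
    norm_num [Mm, Pm, Tm, Fin.sum_univ_succ]

private lemma charpoly_conj12 {n : ℕ} (M T P Q : Matrix (Fin n) (Fin n) ℚ)
    (hPQ : P * Q = 1) (h : M * P = P * T) :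
    M.charpoly = T.charpoly := by
  have hdet : P.det ≠ 0 := by
    intro h0
    have := Matrix.det_mul P Q
    rw [hPQ, Matrix.det_one, h0, zero_mul] at this
    exact one_ne_zero this
  have key : Matrix.charmatrix M * (C : ℚ →+* ℚ[X]).mapMatrix P
      = (C : ℚ →+* ℚ[X]).mapMatrix P * Matrix.charmatrix T := by
    have hmap : ∀ A B : Matrix (Fin n) (Fin n) ℚ,
        (C : ℚ →+* ℚ[X]).mapMatrix (A * B)
          = (C : ℚ →+* ℚ[X]).mapMatrix A * (C : ℚ →+* ℚ[X]).mapMatrix B :=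
      fun A B => _root_.map_mul (RingHom.mapMatrix (C : ℚ →+* ℚ[X])) A B
    have hcomm := (Matrix.scalar_commute (n := Fin n) (X : ℚ[X])
      (fun r => Commute.all _ _) ((C : ℚ →+* ℚ[X]).mapMatrix P)).eq
    simp only [Matrix.charmatrix, sub_mul, mul_sub, ← hmap, h, hcomm]
  have hdet2 := congrArg Matrix.det key
  rw [Matrix.det_mul, Matrix.det_mul, ← RingHom.map_det] at hdet2
  have hC : (C : ℚ →+* ℚ[X]) P.det ≠ 0 := by simpa using hdet
  unfold Matrix.charpoly
  exact mul_right_cancel₀ hC (by rw [hdet2]; ring)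

private lemma cp11 : (!![3,2,0,-2; 6,3,2,-4; 8,6,3,-6; 18,12,6,-13] :
    Matrix (Fin 4) (Fin 4) ℚ).charpoly = (X + 1) ^ 4 := by
  rw [Matrix.charpoly, show ((!![3,2,0,-2; 6,3,2,-4; 8,6,3,-6; 18,12,6,-13] :
    Matrix (Fin 4) (Fin 4) ℚ).charmatrix) =
    !![X-3,-2,0,2; -6,X-3,-2,4; -8,-6,X-3,6; -18,-12,-6,X+13] from ?_]
  · simp [Matrix.det_succ_row_zero, Fin.sum_univ_succ, Fin.succAbove,
      Fin.castSucc, Fin.castAdd, Fin.castLE]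
    ring
  · ext i j
    rw [charmatrix_apply]
    fin_cases i <;> fin_cases j <;>
      simp [Matrix.scalar_apply, Matrix.one_apply, map_ofNat] <;> ring

private lemma cp22 : (!![3,2,4,6; 6,3,10,16; 12,6,19,30; 2,0,2,3] :
    Matrix (Fin 4) (Fin 4) ℚ).charpoly
      = X ^ 4 - 28 * X ^ 3 + 6 * X ^ 2 - 28 * X + 1 := by
  rw [Matrix.charpoly, show ((!![3,2,4,6; 6,3,10,16; 12,6,19,30; 2,0,2,3] :
    Matrix (Fin 4) (Fin 4) ℚ).charmatrix) =
    !![X-3,-2,-4,-6; -6,X-3,-10,-16; -12,-6,X-19,-30; -2,0,-2,X-3] from ?_]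
  · simp [Matrix.det_succ_row_zero, Fin.sum_univ_succ, Fin.succAbove,
      Fin.castSucc, Fin.castAdd, Fin.castLE]
    ring
  · ext i j
    rw [charmatrix_apply]
    fin_cases i <;> fin_cases j <;>
      simp [Matrix.scalar_apply, Matrix.one_apply, map_ofNat] <;> ring

private lemma hblock : Tm = Matrix.reindex finSumFinEquiv finSumFinEquiv
    (Matrix.fromBlocks (!![3,2,0,-2; 6,3,2,-4; 8,6,3,-6; 18,12,6,-13])
      (!![0,0,4,6; 0,0,8,12; 4,0,16,24; 6,0,32,48]) 0
      (!![3,2,4,6; 6,3,10,16; 12,6,19,30; 2,0,2,3])) := by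
  ext i j
  fin_cases i <;> fin_cases j <;> rfl

theorem stmt_12 :
    (!![3,2,0,0,0,0,0,2; 6,3,2,4,0,0,0,4; 12,6,3,6,0,0,0,8; 0,0,2,3,2,0,0,0;
       0,0,4,6,3,2,0,0; 0,0,8,12,6,3,2,0; 4,0,16,24,12,6,3,2;
       6,0,32,48,24,12,6,3] : Matrix (Fin 8) (Fin 8) ℚ).charpoly
      = (X + 1) ^ 4 * (X ^ 4 - 28 * X ^ 3 + 6 * X ^ 2 - 28 * X + 1) := by
  rw [show (!![3,2,0,0,0,0,0,2; 6,3,2,4,0,0,0,4; 12,6,3,6,0,0,0,8; 0,0,2,3,2,0,0,0;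
       0,0,4,6,3,2,0,0; 0,0,8,12,6,3,2,0; 4,0,16,24,12,6,3,2;
       6,0,32,48,24,12,6,3] : Matrix (Fin 8) (Fin 8) ℚ) = Mm from rfl,
     charpoly_conj12 Mm Tm Pm Qm hPQ hMP, hblock, Matrix.charpoly_reindex,
     Matrix.charpoly_fromBlocks_zero₂₁, cp11, cp22]
end

section
/- The polynomial x⁴ − 28x³ + 6x² − 28x + 1 is irreducible over ℚ, its roots include λ = 7 + 4√3 + 2√(24 + 14√3) and λ⁻¹ = 7 + 4√3 − 2√(24 + 14√3), and its other two roots are complex numbers of absolute value 1. -/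
open Polynomial

lemma aux_irred : Irreducible (X ^ 4 - 28 * X ^ 3 + 6 * X ^ 2 - 28 * X + 1 : ℚ[X]) := by
  set q : ℤ[X] := X ^ 4 - 28 * X ^ 3 + 6 * X ^ 2 - 28 * X + 1 with hq
  have hmq : q.Monic := by unfold q; monicity!
  have hmap : (X ^ 4 - 28 * X ^ 3 + 6 * X ^ 2 - 28 * X + 1 : ℚ[X])
      = q.map (algebraMap ℤ ℚ) := by
    simp [hq, Polynomial.map_add, Polynomial.map_sub, Polynomial.map_pow,
      Polynomial.map_mul, Polynomial.map_ofNat, Polynomial.map_one]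
  rw [hmap, ← hmq.irreducible_iff_irreducible_map_fraction_map]
  set r : ℤ[X] := X ^ 4 - 24 * X ^ 3 - 72 * X ^ 2 - 96 * X - 48 with hr
  have hmr : r.Monic := by unfold r; monicity!
  have hshift : (algEquivAevalXAddC (1:ℤ)) q = r := by
    simp [hq, hr, algEquivAevalXAddC, algEquivOfCompEqX, map_add, map_sub, map_mul, map_pow,
      map_ofNat, map_one]
    ring
  have hrdeg : r.natDegree = 4 := by unfold r; compute_degree!
  have hirr_r : Irreducible r := by
    have hprime : (Ideal.span {(3:ℤ)}).IsPrime :=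
      (Ideal.span_singleton_prime (by norm_num)).2 (by norm_num)
    have heis : r.IsEisensteinAt (Ideal.span {(3:ℤ)}) := by
      refine hmr.isEisensteinAt_of_mem_of_notMem ?_ ?_ ?_
      · exact hprime.ne_top
      · intro n hn
        rw [hrdeg] at hn
        interval_cases n <;>
          simp [hr, Ideal.mem_span_singleton, coeff_one, coeff_X] <;> decide
      · rw [Ideal.span_singleton_pow, Ideal.mem_span_singleton]
        simp [hr, coeff_one, coeff_X]
    exact heis.irreducible hprime hmr.isPrimitive (by omega)
  rw [← hshift] at hirr_r
  exact (MulEquiv.irreducible_iff (algEquivAevalXAddC (1:ℤ)).toMulEquiv).1 hirr_r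

theorem stmt_13 :
    Irreducible (X ^ 4 - 28 * X ^ 3 + 6 * X ^ 2 - 28 * X + 1 : ℚ[X]) ∧
    (((7 + 4 * Real.sqrt 3 + 2 * Real.sqrt (24 + 14 * Real.sqrt 3)) : ℝ) ^ 4
      - 28 * (7 + 4 * Real.sqrt 3 + 2 * Real.sqrt (24 + 14 * Real.sqrt 3)) ^ 3
      + 6 * (7 + 4 * Real.sqrt 3 + 2 * Real.sqrt (24 + 14 * Real.sqrt 3)) ^ 2
      - 28 * (7 + 4 * Real.sqrt 3 + 2 * Real.sqrt (24 + 14 * Real.sqrt 3)) + 1 = 0) ∧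
    (((7 + 4 * Real.sqrt 3 - 2 * Real.sqrt (24 + 14 * Real.sqrt 3)) : ℝ) ^ 4
      - 28 * (7 + 4 * Real.sqrt 3 - 2 * Real.sqrt (24 + 14 * Real.sqrt 3)) ^ 3
      + 6 * (7 + 4 * Real.sqrt 3 - 2 * Real.sqrt (24 + 14 * Real.sqrt 3)) ^ 2
      - 28 * (7 + 4 * Real.sqrt 3 - 2 * Real.sqrt (24 + 14 * Real.sqrt 3)) + 1 = 0) ∧
    ((7 + 4 * Real.sqrt 3 - 2 * Real.sqrt (24 + 14 * Real.sqrt 3) : ℝ)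
      = (7 + 4 * Real.sqrt 3 + 2 * Real.sqrt (24 + 14 * Real.sqrt 3) : ℝ)⁻¹) ∧
    (∀ z : ℂ, z ^ 4 - 28 * z ^ 3 + 6 * z ^ 2 - 28 * z + 1 = 0 →
      z = ((7 + 4 * Real.sqrt 3 + 2 * Real.sqrt (24 + 14 * Real.sqrt 3) : ℝ) : ℂ) ∨
      z = ((7 + 4 * Real.sqrt 3 - 2 * Real.sqrt (24 + 14 * Real.sqrt 3) : ℝ) : ℂ) ∨
      (z.im ≠ 0 ∧ ‖z‖ = 1)) := by
  have hs0 : (0:ℝ) ≤ 3 := by norm_num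
  set s : ℝ := Real.sqrt 3 with hs_def
  have hsn : 0 ≤ s := Real.sqrt_nonneg 3
  have ha : s ^ 2 = 3 := Real.sq_sqrt hs0
  set t : ℝ := Real.sqrt (24 + 14 * s) with ht_def
  have htn : 0 ≤ t := Real.sqrt_nonneg _
  have hb : t ^ 2 = 24 + 14 * s := Real.sq_sqrt (by nlinarith)
  refine ⟨aux_irred, ?_, ?_, ?_, ?_⟩
  · linear_combination (8512 + 1792*t + 5376*s + 512*s*t + 256*s^2) * ha
      + (-768 + 16*t^2 + 224*s + 128*s*t + 384*s^2) * hb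
  · linear_combination (8512 - 1792*t + 5376*s - 512*s*t + 256*s^2) * ha
      + (-768 + 16*t^2 + 224*s - 128*s*t + 384*s^2) * hb
  · have hmul : (7 + 4*s - 2*t) * (7 + 4*s + 2*t) = 1 := by
      linear_combination 16 * ha - 4 * hb
    exact eq_inv_of_mul_eq_one_left hmul
  · intro z hz
    have haC : ((s:ℂ)) ^ 2 = 3 := by exact_mod_cast ha
    have hbC : ((t:ℂ)) ^ 2 = 24 + 14 * (s:ℂ) := by exact_mod_cast hb
    have hfac : (z - (7 + 4*(s:ℂ) + 2*(t:ℂ))) * (z - (7 + 4*(s:ℂ) - 2*(t:ℂ)))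
        * (z^2 - (14 - 8*(s:ℂ))*z + 1) = 0 := by
      linear_combination hz + (16 - 224*z + 128*z*(s:ℂ) - 48*z^2) * haC
        + (-4 + 56*z - 32*z*(s:ℂ) - 4*z^2) * hbC
    rcases mul_eq_zero.1 hfac with h12 | h3
    · rcases mul_eq_zero.1 h12 with h1 | h2
      · left
        push_cast
        linear_combination h1
      · right; left
        push_cast
        linear_combination h2
    · right; right
      have h3' : z^2 - ((((14:ℝ) - 8*s : ℝ)):ℂ)*z + 1 = 0 := by
        push_cast
        linear_combination h3
      set x := z.re with hx
      set y := z.im with hy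
      have hre : x^2 - y^2 - (14 - 8*s)*x + 1 = 0 := by
        have := congrArg Complex.re h3'
        simp [Complex.ext_iff, Complex.mul_re, Complex.mul_im, pow_two] at this
        linarith [this]
      have him : 2*x*y - (14 - 8*s)*y = 0 := by
        have := congrArg Complex.im h3'
        simp [Complex.ext_iff, Complex.mul_re, Complex.mul_im, pow_two] at this
        linarith [this]
      have hslow : 12 < 7 * s := by nlinarith [sq_nonneg (7*s - 12)]
      have hy0 : y ≠ 0 := by
        intro h0
        rw [h0] at hre
        nlinarith [sq_nonneg (2*x - (14 - 8*s)), hre]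
      refine ⟨hy0, ?_⟩
      have hxq : 2*x = 14 - 8*s := by
        rcases mul_eq_zero.1 (by linarith [him] : (2*x - (14 - 8*s)) * y = 0) with h | h
        · linarith
        · exact absurd h hy0
      have habs2 : ‖z‖^2 = 1 := by
        rw [Complex.sq_norm, Complex.normSq_apply, ← hx, ← hy]
        nlinarith [hre, hxq, ha]
      have := norm_nonneg z
      nlinarith [habs2]
end

section
/- The polynomial p(x) = x⁸ − 24x⁷ + 156x⁶ − 424x⁵ − 186x⁴ − 424x³ + 156x² − 24x + 1 is irreducible over ℚ. -/
open Polynomial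

instance : Fact (Nat.Prime 5) := ⟨by norm_num⟩

noncomputable def qq : (ZMod 5)[X] :=
  X ^ 8 + X ^ 7 + X ^ 6 + X ^ 5 + C 4 * X ^ 4 + X ^ 3 + X ^ 2 + X + 1

lemma qq_monic : qq.Monic := by unfold qq; monicity!

lemma qq_natDegree : qq.natDegree = 8 := by unfold qq; compute_degree!

lemma dec1 : ∀ a0 : ZMod 5,
    ¬((a0 - a0^2 + a0^3 - 4*a0^4 + a0^5 - a0^6 + a0^7 - a0^8 = 1)) := by decide

lemma factor1 (a b : (ZMod 5)[X]) (ha : a.Monic) (hb : b.Monic)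
    (hda : a.natDegree = 1) (hdb : b.natDegree = 7) : a * b ≠ qq := by
  intro hab
  have e : ∀ n, (∑ p ∈ Finset.HasAntidiagonal.antidiagonal n, a.coeff p.1 * b.coeff p.2) = qq.coeff n := by
    intro n; rw [← Polynomial.coeff_mul, hab]
  have hAk : a.coeff 1 = 1 := by have h := ha.coeff_natDegree; rw [hda] at h; exact h
  have hBm : b.coeff 7 = 1 := by have h := hb.coeff_natDegree; rw [hdb] at h; exact h
  have hA : ∀ i, 1 < i → a.coeff i = 0 := fun i hi =>
    Polynomial.coeff_eq_zero_of_natDegree_lt (by omega)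
  have hB : ∀ i, 7 < i → b.coeff i = 0 := fun i hi =>
    Polynomial.coeff_eq_zero_of_natDegree_lt (by omega)
  have e7 := e 7
  have e6 := e 6
  have e5 := e 5
  have e4 := e 4
  have e3 := e 3
  have e2 := e 2
  have e1 := e 1
  have e0 := e 0
  simp only [qq, Finset.Nat.sum_antidiagonal_eq_sum_range_succ_mk, Finset.sum_range_succ,
    Finset.sum_range_zero, coeff_add, coeff_X_pow, coeff_C_mul, coeff_one, coeff_X,
    hAk, hBm, hA 2 (by norm_num), hA 3 (by norm_num), hA 4 (by norm_num), hA 5 (by norm_num), hA 6 (by norm_num), hA 7 (by norm_num)] at e7 e6 e5 e4 e3 e2 e1 e0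
  norm_num at e7 e6 e5 e4 e3 e2 e1 e0
  have hb6 : b.coeff 6 = 1 - a.coeff 0 := by
    linear_combination e7
  have hb5 : b.coeff 5 = 1 - a.coeff 0 + a.coeff 0^2 := by
    simp only [hb6] at e6
    linear_combination e6
  have hb4 : b.coeff 4 = 1 - a.coeff 0 + a.coeff 0^2 - a.coeff 0^3 := by
    simp only [hb6, hb5] at e5
    linear_combination e5
  have hb3 : b.coeff 3 = 4 - a.coeff 0 + a.coeff 0^2 - a.coeff 0^3 + a.coeff 0^4 := by
    simp only [hb6, hb5, hb4] at e4
    linear_combination e4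
  have hb2 : b.coeff 2 = 1 - 4*a.coeff 0 + a.coeff 0^2 - a.coeff 0^3 + a.coeff 0^4 - a.coeff 0^5 := by
    simp only [hb6, hb5, hb4, hb3] at e3
    linear_combination e3
  have hb1 : b.coeff 1 = 1 - a.coeff 0 + 4*a.coeff 0^2 - a.coeff 0^3 + a.coeff 0^4 - a.coeff 0^5 + a.coeff 0^6 := by
    simp only [hb6, hb5, hb4, hb3, hb2] at e2
    linear_combination e2
  have hb0 : b.coeff 0 = 1 - a.coeff 0 + a.coeff 0^2 - 4*a.coeff 0^3 + a.coeff 0^4 - a.coeff 0^5 + a.coeff 0^6 - a.coeff 0^7 := by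
    simp only [hb6, hb5, hb4, hb3, hb2, hb1] at e1
    linear_combination e1
  refine dec1 (a.coeff 0) ?_
  · simp only [hb6, hb5, hb4, hb3, hb2, hb1, hb0] at e0
    linear_combination e0

lemma dec2 : ∀ a1 a0 : ZMod 5,
    ¬((a1 - a1^2 + 4*a1^3 - a1^4 + a1^5 - a1^6 + a1^7 + a0 - 8*a0*a1 + 3*a0*a1^2 - 4*a0*a1^3 + 5*a0*a1^4 - 6*a0*a1^5 - a0^2 + 3*a0^2*a1 - 6*a0^2*a1^2 + 10*a0^2*a1^3 + a0^3 - 4*a0^3*a1 = 1) ∧ (a0 - a0*a1 + 4*a0*a1^2 - a0*a1^3 + a0*a1^4 - a0*a1^5 + a0*a1^6 - 4*a0^2 + 2*a0^2*a1 - 3*a0^2*a1^2 + 4*a0^2*a1^3 - 5*a0^2*a1^4 + a0^3 - 3*a0^3*a1 + 6*a0^3*a1^2 - a0^4 = 1)) := by decide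

lemma factor2 (a b : (ZMod 5)[X]) (ha : a.Monic) (hb : b.Monic)
    (hda : a.natDegree = 2) (hdb : b.natDegree = 6) : a * b ≠ qq := by
  intro hab
  have e : ∀ n, (∑ p ∈ Finset.HasAntidiagonal.antidiagonal n, a.coeff p.1 * b.coeff p.2) = qq.coeff n := by
    intro n; rw [← Polynomial.coeff_mul, hab]
  have hAk : a.coeff 2 = 1 := by have h := ha.coeff_natDegree; rw [hda] at h; exact h
  have hBm : b.coeff 6 = 1 := by have h := hb.coeff_natDegree; rw [hdb] at h; exact h
  have hA : ∀ i, 2 < i → a.coeff i = 0 := fun i hi =>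
    Polynomial.coeff_eq_zero_of_natDegree_lt (by omega)
  have hB : ∀ i, 6 < i → b.coeff i = 0 := fun i hi =>
    Polynomial.coeff_eq_zero_of_natDegree_lt (by omega)
  have e7 := e 7
  have e6 := e 6
  have e5 := e 5
  have e4 := e 4
  have e3 := e 3
  have e2 := e 2
  have e1 := e 1
  have e0 := e 0
  simp only [qq, Finset.Nat.sum_antidiagonal_eq_sum_range_succ_mk, Finset.sum_range_succ,
    Finset.sum_range_zero, coeff_add, coeff_X_pow, coeff_C_mul, coeff_one, coeff_X,
    hAk, hBm, hA 3 (by norm_num), hA 4 (by norm_num), hA 5 (by norm_num), hA 6 (by norm_num), hA 7 (by norm_num), hB 7 (by norm_num)] at e7 e6 e5 e4 e3 e2 e1 e0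
  norm_num at e7 e6 e5 e4 e3 e2 e1 e0
  have hb5 : b.coeff 5 = 1 - a.coeff 1 := by
    linear_combination e7
  have hb4 : b.coeff 4 = 1 - a.coeff 1 + a.coeff 1^2 - a.coeff 0 := by
    simp only [hb5] at e6
    linear_combination e6
  have hb3 : b.coeff 3 = 1 - a.coeff 1 + a.coeff 1^2 - a.coeff 1^3 - a.coeff 0 + 2*a.coeff 0*a.coeff 1 := by
    simp only [hb5, hb4] at e5
    linear_combination e5
  have hb2 : b.coeff 2 = 4 - a.coeff 1 + a.coeff 1^2 - a.coeff 1^3 + a.coeff 1^4 - a.coeff 0 + 2*a.coeff 0*a.coeff 1 - 3*a.coeff 0*a.coeff 1^2 + a.coeff 0^2 := by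
    simp only [hb5, hb4, hb3] at e4
    linear_combination e4
  have hb1 : b.coeff 1 = 1 - 4*a.coeff 1 + a.coeff 1^2 - a.coeff 1^3 + a.coeff 1^4 - a.coeff 1^5 - a.coeff 0 + 2*a.coeff 0*a.coeff 1 - 3*a.coeff 0*a.coeff 1^2 + 4*a.coeff 0*a.coeff 1^3 + a.coeff 0^2 - 3*a.coeff 0^2*a.coeff 1 := by
    simp only [hb5, hb4, hb3, hb2] at e3
    linear_combination e3
  have hb0 : b.coeff 0 = 1 - a.coeff 1 + 4*a.coeff 1^2 - a.coeff 1^3 + a.coeff 1^4 - a.coeff 1^5 + a.coeff 1^6 - 4*a.coeff 0 + 2*a.coeff 0*a.coeff 1 - 3*a.coeff 0*a.coeff 1^2 + 4*a.coeff 0*a.coeff 1^3 - 5*a.coeff 0*a.coeff 1^4 + a.coeff 0^2 - 3*a.coeff 0^2*a.coeff 1 + 6*a.coeff 0^2*a.coeff 1^2 - a.coeff 0^3 := by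
    simp only [hb5, hb4, hb3, hb2, hb1] at e2
    linear_combination e2
  refine dec2 (a.coeff 1) (a.coeff 0) ⟨?_, ?_⟩
  · simp only [hb5, hb4, hb3, hb2, hb1, hb0] at e1
    linear_combination e1
  · simp only [hb5, hb4, hb3, hb2, hb1, hb0] at e0
    linear_combination e0

lemma dec3 : ∀ a2 a1 a0 : ZMod 5,
    ¬((a2 - 4*a2^2 + a2^3 - a2^4 + a2^5 - a2^6 + 4*a1 - 2*a1*a2 + 3*a1*a2^2 - 4*a1*a2^3 + 5*a1*a2^4 - a1^2 + 3*a1^2*a2 - 6*a1^2*a2^2 + a1^3 + a0 - 2*a0*a2 + 3*a0*a2^2 - 4*a0*a2^3 - 2*a0*a1 + 6*a0*a1*a2 - a0^2 = 1) ∧ (a1 - 4*a1*a2 + a1*a2^2 - a1*a2^3 + a1*a2^4 - a1*a2^5 - a1^2 + 2*a1^2*a2 - 3*a1^2*a2^2 + 4*a1^2*a2^3 + a1^3 - 3*a1^3*a2 + 4*a0 - a0*a2 + a0*a2^2 - a0*a2^3 + a0*a2^4 - 2*a0*a1 + 4*a0*a1*a2 - 6*a0*a1*a2^2 + 3*a0*a1^2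 - a0^2 + 2*a0^2*a2 = 1) ∧ (a0 - 4*a0*a2 + a0*a2^2 - a0*a2^3 + a0*a2^4 - a0*a2^5 - a0*a1 + 2*a0*a1*a2 - 3*a0*a1*a2^2 + 4*a0*a1*a2^3 + a0*a1^2 - 3*a0*a1^2*a2 - a0^2 + 2*a0^2*a2 - 3*a0^2*a2^2 + 2*a0^2*a1 = 1)) := by decide

lemma factor3 (a b : (ZMod 5)[X]) (ha : a.Monic) (hb : b.Monic)
    (hda : a.natDegree = 3) (hdb : b.natDegree = 5) : a * b ≠ qq := by
  intro hab
  have e : ∀ n, (∑ p ∈ Finset.HasAntidiagonal.antidiagonal n, a.coeff p.1 * b.coeff p.2) = qq.coeff n := by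
    intro n; rw [← Polynomial.coeff_mul, hab]
  have hAk : a.coeff 3 = 1 := by have h := ha.coeff_natDegree; rw [hda] at h; exact h
  have hBm : b.coeff 5 = 1 := by have h := hb.coeff_natDegree; rw [hdb] at h; exact h
  have hA : ∀ i, 3 < i → a.coeff i = 0 := fun i hi =>
    Polynomial.coeff_eq_zero_of_natDegree_lt (by omega)
  have hB : ∀ i, 5 < i → b.coeff i = 0 := fun i hi =>
    Polynomial.coeff_eq_zero_of_natDegree_lt (by omega)
  have e7 := e 7
  have e6 := e 6
  have e5 := e 5
  have e4 := e 4
  have e3 := e 3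
  have e2 := e 2
  have e1 := e 1
  have e0 := e 0
  simp only [qq, Finset.Nat.sum_antidiagonal_eq_sum_range_succ_mk, Finset.sum_range_succ,
    Finset.sum_range_zero, coeff_add, coeff_X_pow, coeff_C_mul, coeff_one, coeff_X,
    hAk, hBm, hA 4 (by norm_num), hA 5 (by norm_num), hA 6 (by norm_num), hA 7 (by norm_num), hB 6 (by norm_num), hB 7 (by norm_num)] at e7 e6 e5 e4 e3 e2 e1 e0
  norm_num at e7 e6 e5 e4 e3 e2 e1 e0
  have hb4 : b.coeff 4 = 1 - a.coeff 2 := by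
    linear_combination e7
  have hb3 : b.coeff 3 = 1 - a.coeff 2 + a.coeff 2^2 - a.coeff 1 := by
    simp only [hb4] at e6
    linear_combination e6
  have hb2 : b.coeff 2 = 1 - a.coeff 2 + a.coeff 2^2 - a.coeff 2^3 - a.coeff 1 + 2*a.coeff 1*a.coeff 2 - a.coeff 0 := by
    simp only [hb4, hb3] at e5
    linear_combination e5
  have hb1 : b.coeff 1 = 4 - a.coeff 2 + a.coeff 2^2 - a.coeff 2^3 + a.coeff 2^4 - a.coeff 1 + 2*a.coeff 1*a.coeff 2 - 3*a.coeff 1*a.coeff 2^2 + a.coeff 1^2 - a.coeff 0 + 2*a.coeff 0*a.coeff 2 := by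
    simp only [hb4, hb3, hb2] at e4
    linear_combination e4
  have hb0 : b.coeff 0 = 1 - 4*a.coeff 2 + a.coeff 2^2 - a.coeff 2^3 + a.coeff 2^4 - a.coeff 2^5 - a.coeff 1 + 2*a.coeff 1*a.coeff 2 - 3*a.coeff 1*a.coeff 2^2 + 4*a.coeff 1*a.coeff 2^3 + a.coeff 1^2 - 3*a.coeff 1^2*a.coeff 2 - a.coeff 0 + 2*a.coeff 0*a.coeff 2 - 3*a.coeff 0*a.coeff 2^2 + 2*a.coeff 0*a.coeff 1 := by
    simp only [hb4, hb3, hb2, hb1] at e3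
    linear_combination e3
  refine dec3 (a.coeff 2) (a.coeff 1) (a.coeff 0) ⟨?_, ?_, ?_⟩
  · simp only [hb4, hb3, hb2, hb1, hb0] at e2
    linear_combination e2
  · simp only [hb4, hb3, hb2, hb1, hb0] at e1
    linear_combination e1
  · simp only [hb4, hb3, hb2, hb1, hb0] at e0
    linear_combination e0

lemma dec4 : ∀ a3 a2 a1 a0 : ZMod 5,
    ¬((4*a3 - a3^2 + a3^3 - a3^4 + a3^5 + a2 - 2*a2*a3 + 3*a2*a3^2 - 4*a2*a3^3 - a2^2 + 3*a2^2*a3 + a1 - 2*a1*a3 + 3*a1*a3^2 - 2*a1*a2 + a0 - 2*a0*a3 = 1) ∧ (4*a2 - a2*a3 + a2*a3^2 - a2*a3^3 + a2*a3^4 - a2^2 + 2*a2^2*a3 - 3*a2^2*a3^2 + a2^3 + a1 - a1*a3 + a1*a3^2 - a1*a3^3 - 2*a1*a2 + 4*a1*a2*a3 - a1^2 + a0 - a0*a3 + a0*a3^2 - 2*a0*a2 = 1) ∧ (4*a1 - a1*a3 + a1*a3^2 - a1*a3^3 + a1*a3^4 - a1*a2 + 2*a1*a2*a3 - 3*a1*a2*a3^2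 + a1*a2^2 - a1^2 + 2*a1^2*a3 + a0 - a0*a3 + a0*a3^2 - a0*a3^3 - a0*a2 + 2*a0*a2*a3 - 2*a0*a1 = 1) ∧ (4*a0 - a0*a3 + a0*a3^2 - a0*a3^3 + a0*a3^4 - a0*a2 + 2*a0*a2*a3 - 3*a0*a2*a3^2 + a0*a2^2 - a0*a1 + 2*a0*a1*a3 - a0^2 = 1)) := by decide

lemma factor4 (a b : (ZMod 5)[X]) (ha : a.Monic) (hb : b.Monic)
    (hda : a.natDegree = 4) (hdb : b.natDegree = 4) : a * b ≠ qq := by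
  intro hab
  have e : ∀ n, (∑ p ∈ Finset.HasAntidiagonal.antidiagonal n, a.coeff p.1 * b.coeff p.2) = qq.coeff n := by
    intro n; rw [← Polynomial.coeff_mul, hab]
  have hAk : a.coeff 4 = 1 := by have h := ha.coeff_natDegree; rw [hda] at h; exact h
  have hBm : b.coeff 4 = 1 := by have h := hb.coeff_natDegree; rw [hdb] at h; exact h
  have hA : ∀ i, 4 < i → a.coeff i = 0 := fun i hi =>
    Polynomial.coeff_eq_zero_of_natDegree_lt (by omega)
  have hB : ∀ i, 4 < i → b.coeff i = 0 := fun i hi =>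
    Polynomial.coeff_eq_zero_of_natDegree_lt (by omega)
  have e7 := e 7
  have e6 := e 6
  have e5 := e 5
  have e4 := e 4
  have e3 := e 3
  have e2 := e 2
  have e1 := e 1
  have e0 := e 0
  simp only [qq, Finset.Nat.sum_antidiagonal_eq_sum_range_succ_mk, Finset.sum_range_succ,
    Finset.sum_range_zero, coeff_add, coeff_X_pow, coeff_C_mul, coeff_one, coeff_X,
    hAk, hBm, hA 5 (by norm_num), hA 6 (by norm_num), hA 7 (by norm_num), hB 5 (by norm_num), hB 6 (by norm_num), hB 7 (by norm_num)] at e7 e6 e5 e4 e3 e2 e1 e0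
  norm_num at e7 e6 e5 e4 e3 e2 e1 e0
  have hb3 : b.coeff 3 = 1 - a.coeff 3 := by
    linear_combination e7
  have hb2 : b.coeff 2 = 1 - a.coeff 3 + a.coeff 3^2 - a.coeff 2 := by
    simp only [hb3] at e6
    linear_combination e6
  have hb1 : b.coeff 1 = 1 - a.coeff 3 + a.coeff 3^2 - a.coeff 3^3 - a.coeff 2 + 2*a.coeff 2*a.coeff 3 - a.coeff 1 := by
    simp only [hb3, hb2] at e5
    linear_combination e5
  have hb0 : b.coeff 0 = 4 - a.coeff 3 + a.coeff 3^2 - a.coeff 3^3 + a.coeff 3^4 - a.coeff 2 + 2*a.coeff 2*a.coeff 3 - 3*a.coeff 2*a.coeff 3^2 + a.coeff 2^2 - a.coeff 1 + 2*a.coeff 1*a.coeff 3 - a.coeff 0 := by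
    simp only [hb3, hb2, hb1] at e4
    linear_combination e4
  refine dec4 (a.coeff 3) (a.coeff 2) (a.coeff 1) (a.coeff 0) ⟨?_, ?_, ?_, ?_⟩
  · simp only [hb3, hb2, hb1, hb0] at e3
    linear_combination e3
  · simp only [hb3, hb2, hb1, hb0] at e2
    linear_combination e2
  · simp only [hb3, hb2, hb1, hb0] at e1
    linear_combination e1
  · simp only [hb3, hb2, hb1, hb0] at e0
    linear_combination e0

lemma no_mid (a b : (ZMod 5)[X]) (ha : a.Monic) (hb : b.Monic)
    (hab : a * b = qq) : a.natDegree = 0 ∨ a.natDegree = 8 := by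
  have hsum : a.natDegree + b.natDegree = 8 := by
    rw [← ha.natDegree_mul hb, hab, qq_natDegree]
  by_cases h0 : a.natDegree = 0
  · exact Or.inl h0
  by_cases h8 : a.natDegree = 8
  · exact Or.inr h8
  exfalso
  have h17 : a.natDegree = 1 ∨ a.natDegree = 2 ∨ a.natDegree = 3 ∨ a.natDegree = 4 ∨
      a.natDegree = 5 ∨ a.natDegree = 6 ∨ a.natDegree = 7 := by omega
  have hab' : b * a = qq := by rw [mul_comm]; exact hab
  rcases h17 with h | h | h | h | h | h | h
  · exact factor1 a b ha hb h (by omega) hab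
  · exact factor2 a b ha hb h (by omega) hab
  · exact factor3 a b ha hb h (by omega) hab
  · exact factor4 a b ha hb h (by omega) hab
  · exact factor3 b a hb ha (by omega) (by omega) hab'
  · exact factor2 b a hb ha (by omega) (by omega) hab'
  · exact factor1 b a hb ha (by omega) (by omega) hab'

lemma qq_irr : Irreducible qq := by
  constructor
  · intro h
    have := Polynomial.natDegree_eq_zero_of_isUnit h
    rw [qq_natDegree] at this
    exact absurd this (by norm_num)
  · intro a b hab
    have hq0 : qq ≠ 0 := qq_monic.ne_zero
    have hl : a.leadingCoeff * b.leadingCoeff = 1 := by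
      have h1 : qq.leadingCoeff = 1 := qq_monic
      rw [hab, Polynomial.leadingCoeff_mul] at h1
      exact h1
    have ha' : (C b.leadingCoeff * a).Monic := by
      unfold Polynomial.Monic
      rw [Polynomial.leadingCoeff_mul, Polynomial.leadingCoeff_C, mul_comm]
      exact hl
    have hb' : (C a.leadingCoeff * b).Monic := by
      unfold Polynomial.Monic
      rw [Polynomial.leadingCoeff_mul, Polynomial.leadingCoeff_C]
      exact hl
    have hmul : (C b.leadingCoeff * a) * (C a.leadingCoeff * b) = qq := by
      have h2 : (C b.leadingCoeff * a) * (C a.leadingCoeff * b)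
          = C a.leadingCoeff * C b.leadingCoeff * (a * b) := by ring
      rw [h2, ← Polynomial.C_mul, hl, Polynomial.C_1, one_mul, ← hab]
    rcases no_mid _ _ ha' hb' hmul with h0 | h8
    · left
      have h1 : C b.leadingCoeff * a = 1 := (ha'.natDegree_eq_zero).mp h0
      exact IsUnit.of_mul_eq_one (a := a) (C b.leadingCoeff) (by rw [mul_comm]; exact h1)
    · right
      have hsum : (C b.leadingCoeff * a).natDegree + (C a.leadingCoeff * b).natDegree = 8 := by
        rw [← ha'.natDegree_mul hb', hmul, qq_natDegree]
      have h0b : (C a.leadingCoeff * b).natDegree = 0 := by omega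
      have h1 : C a.leadingCoeff * b = 1 := (hb'.natDegree_eq_zero).mp h0b
      exact IsUnit.of_mul_eq_one (a := b) (C a.leadingCoeff) (by rw [mul_comm]; exact h1)

noncomputable def pZ : ℤ[X] :=
  X ^ 8 - 24 * X ^ 7 + 156 * X ^ 6 - 424 * X ^ 5 - 186 * X ^ 4
    - 424 * X ^ 3 + 156 * X ^ 2 - 24 * X + 1

lemma pZ_monic : pZ.Monic := by unfold pZ; monicity!

lemma pZ_map5 : pZ.map (Int.castRingHom (ZMod 5)) = qq := by
  unfold pZ qq
  have h5 : ((5 : ℤ) : ZMod 5) = 0 := by decide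
  simp only [Polynomial.map_add, Polynomial.map_sub, Polynomial.map_mul, Polynomial.map_pow,
    Polynomial.map_X, Polynomial.map_one, Polynomial.map_ofNat]
  have hC4 : (C (4 : ZMod 5)) = 4 := by
    have h : C ((4:ℕ) : ZMod 5) = ((4:ℕ) : (ZMod 5)[X]) := Polynomial.C_eq_natCast _
    rw [show ((4:ℕ) : ZMod 5) = 4 by decide] at h
    rw [show ((4:ℕ) : (ZMod 5)[X]) = 4 by norm_num] at h
    exact h
  rw [hC4]
  have h5' : (5 : (ZMod 5)[X]) = 0 := by
    have h : C ((5:ℕ) : ZMod 5) = ((5:ℕ) : (ZMod 5)[X]) := Polynomial.C_eq_natCast _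
    rw [show ((5:ℕ) : ZMod 5) = 0 by decide, map_zero] at h
    rw [show ((5:ℕ) : (ZMod 5)[X]) = 5 by norm_num] at h
    exact h.symm
  linear_combination ((-5 : (ZMod 5)[X]) * X ^ 7 + 31 * X ^ 6 - 85 * X ^ 5 - 38 * X ^ 4
    - 85 * X ^ 3 + 31 * X ^ 2 - 5 * X) * h5'

lemma pZ_irr : Irreducible pZ :=
  pZ_monic.irreducible_of_irreducible_map (Int.castRingHom (ZMod 5)) pZ
    (pZ_map5 ▸ qq_irr)

theorem stmt_15 :
    Irreducible (X ^ 8 - 24 * X ^ 7 + 156 * X ^ 6 - 424 * X ^ 5 - 186 * X ^ 4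
      - 424 * X ^ 3 + 156 * X ^ 2 - 24 * X + 1 : ℚ[X]) := by
  have h : (X ^ 8 - 24 * X ^ 7 + 156 * X ^ 6 - 424 * X ^ 5 - 186 * X ^ 4
      - 424 * X ^ 3 + 156 * X ^ 2 - 24 * X + 1 : ℚ[X]) = pZ.map (Int.castRingHom ℚ) := by
    unfold pZ
    simp only [Polynomial.map_add, Polynomial.map_sub, Polynomial.map_mul, Polynomial.map_pow,
      Polynomial.map_X, Polynomial.map_one, Polynomial.map_ofNat]
  rw [h]
  exact (Polynomial.IsPrimitive.Int.irreducible_iff_irreducible_map_cast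
    pZ_monic.isPrimitive).mp pZ_irr
end

section
/- The polynomial q(y) = y⁴ − 24y³ + 152y² − 352y − 496 is irreducible over ℚ and has exactly two non-real complex roots. -/
open Polynomial

namespace Stmt17Aux


lemma coeffs_eq (p0 p1 p2 p3 q0 q1 q2 q3 : ℤ)
    (h : X ^ 4 + C p3 * X ^ 3 + C p2 * X ^ 2 + C p1 * X + C p0 =
         X ^ 4 + C q3 * X ^ 3 + C q2 * X ^ 2 + C q1 * X + C q0) :
    p0 = q0 ∧ p1 = q1 ∧ p2 = q2 ∧ p3 = q3 := by
  have h0 := congrArg (fun p => Polynomial.coeff p 0) h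
  have h1 := congrArg (fun p => Polynomial.coeff p 1) h
  have h2 := congrArg (fun p => Polynomial.coeff p 2) h
  have h3 := congrArg (fun p => Polynomial.coeff p 3) h
  simp only [coeff_add, coeff_C_mul, coeff_X_pow, coeff_C, coeff_X] at h0 h1 h2 h3
  norm_num at h0 h1 h2 h3
  exact ⟨h0, h1, h2, h3⟩


lemma deg2_shape (p : ℤ[X]) (hm : p.Monic) (hd : p.natDegree = 2) :
    p = X ^ 2 + C (p.coeff 1) * X + C (p.coeff 0) := by
  have h2 : p.coeff 2 = 1 := by
    have := hm.leadingCoeff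
    rwa [Polynomial.leadingCoeff, hd] at this
  ext n
  simp only [coeff_add, coeff_C_mul, coeff_X, coeff_X_pow, coeff_C]
  match n with
  | 0 => norm_num
  | 1 => norm_num
  | 2 => norm_num [h2]
  | (n+3) =>
    have : p.coeff (n+3) = 0 := coeff_eq_zero_of_natDegree_lt (by omega)
    rw [this]
    have h1 : ¬(n + 3 = 2) := by omega
    have h2 : ¬(n + 3 = 1) := by omega
    have h3 : ¬(n + 3 = 0) := by omega
    simp [h1, h2, h3]


lemma no_linear (t : ℤ) (h : t^4 - 24*t^3 + 152*t^2 - 352*t - 496 = 0) : False := by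
  rcases Int.even_or_odd t with ⟨s, hs⟩ | ⟨k, hk⟩
  · -- t = s + s
    subst hs
    have h' : s^4 - 12*s^3 + 38*s^2 - 44*s - 31 = 0 := by
      have h16 : (16:ℤ) * (s^4 - 12*s^3 + 38*s^2 - 44*s - 31) = 16 * 0 := by
        linear_combination h
      exact mul_left_cancel₀ (by norm_num) h16
    have hdvd : s ∣ 31 := ⟨s^3 - 12*s^2 + 38*s - 44, by linear_combination -h'⟩
    have hnat : s.natAbs ∣ 31 := by
      have := Int.natAbs_dvd_natAbs.mpr hdvd; simpa using this
    have h31 : s.natAbs = 1 ∨ s.natAbs = 31 :=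
      (Nat.Prime.eq_one_or_self_of_dvd (by norm_num) _ hnat)
    rcases Int.natAbs_eq s with he | he <;> rcases h31 with h1 | h1 <;>
      rw [h1] at he <;> rw [he] at h' <;> norm_num at h'
  · subst hk
    have : (2*k+1)^4 - 24*(2*k+1)^3 + 152*(2*k+1)^2 - 352*(2*k+1) - 496 =
        2*(8*k^4 - 80*k^3 + 172*k^2 - 116*k) - 719 := by ring
    rw [this] at h
    omega

lemma no_quad (a b c d : ℤ) (h1 : a + c = -24) (h2 : b + d + a*c = 152)
    (h3 : a*d + b*c = -352) (h4 : b*d = -496) : False := by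
  have key : ∀ x y z w : ZMod 2, x+z = 0 → y+w+x*z = 0 → x*w+y*z = 0 → y*w = 0 →
      (x = 0 ∧ y = 0 ∧ z = 0 ∧ w = 0) := by decide
  have c1 := congrArg (fun n : ℤ => (n : ZMod 2)) h1
  have c2 := congrArg (fun n : ℤ => (n : ZMod 2)) h2
  have c3 := congrArg (fun n : ℤ => (n : ZMod 2)) h3
  have c4 := congrArg (fun n : ℤ => (n : ZMod 2)) h4
  push_cast at c1 c2 c3 c4
  have hz : ((-24 : ℤ) : ZMod 2) = 0 := by decide
  obtain ⟨ea, eb, ec, ed⟩ := key _ _ _ _ (by rw [c1]; decide) (by rw [c2]; decide)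
    (by rw [c3]; decide) (by rw [c4]; decide)
  obtain ⟨a', rfl⟩ := (ZMod.intCast_zmod_eq_zero_iff_dvd a 2).mp ea
  obtain ⟨b', rfl⟩ := (ZMod.intCast_zmod_eq_zero_iff_dvd b 2).mp eb
  obtain ⟨c', rfl⟩ := (ZMod.intCast_zmod_eq_zero_iff_dvd c 2).mp ec
  obtain ⟨d', rfl⟩ := (ZMod.intCast_zmod_eq_zero_iff_dvd d 2).mp ed
  have A1 : a' + c' = -12 := by omega
  have A2 : b' + d' + 2*(a'*c') = 76 := by
    have : (2:ℤ) * (b' + d' + 2*(a'*c')) = 2 * 76 := by linear_combination h2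
    exact mul_left_cancel₀ (by norm_num) this
  have A3 : a'*d' + b'*c' = -88 := by
    have : (4:ℤ) * (a'*d' + b'*c') = 4 * (-88) := by linear_combination h3
    exact mul_left_cancel₀ (by norm_num) this
  have A4 : b'*d' = -124 := by
    have : (4:ℤ) * (b'*d') = 4 * (-124) := by linear_combination h4
    exact mul_left_cancel₀ (by norm_num) this
  -- second descent : b', d' even
  have key2 : ∀ x y z w : ZMod 2, y+w+2*(x*z) = 0 → y*w = 0 → (y = 0 ∧ w = 0) := by decide
  have c2' := congrArg (fun n : ℤ => (n : ZMod 2)) A2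
  have c4' := congrArg (fun n : ℤ => (n : ZMod 2)) A4
  push_cast at c2' c4'
  obtain ⟨eb', ed'⟩ := key2 (a' : ZMod 2) _ (c' : ZMod 2) _ (by rw [c2']; decide) (by rw [c4']; decide)
  obtain ⟨b'', rfl⟩ := (ZMod.intCast_zmod_eq_zero_iff_dvd b' 2).mp eb'
  obtain ⟨d'', rfl⟩ := (ZMod.intCast_zmod_eq_zero_iff_dvd d' 2).mp ed'
  have B2 : b'' + d'' + a'*c' = 38 := by
    have : (2:ℤ) * (b'' + d'' + a'*c') = 2 * 38 := by linear_combination A2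
    exact mul_left_cancel₀ (by norm_num) this
  have B3 : a'*d'' + b''*c' = -44 := by
    have : (2:ℤ) * (a'*d'' + b''*c') = 2 * (-44) := by linear_combination A3
    exact mul_left_cancel₀ (by norm_num) this
  have B4 : b''*d'' = -31 := by
    have : (4:ℤ) * (b''*d'') = 4 * (-31) := by linear_combination A4
    exact mul_left_cancel₀ (by norm_num) this
  have hdvd : b'' ∣ 31 := ⟨-d'', by linear_combination B4⟩
  have hnat : b''.natAbs ∣ 31 := by
    have := Int.natAbs_dvd_natAbs.mpr hdvd; simpa using this
  have h31 : b''.natAbs = 1 ∨ b''.natAbs = 31 :=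
    Nat.Prime.eq_one_or_self_of_dvd (by norm_num) _ hnat
  rcases Int.natAbs_eq b'' with he | he <;> rcases h31 with hv | hv <;> rw [hv] at he <;>
    subst he <;> push_cast at B2 B3 B4
  · -- b'' = 1, d'' = -31
    have hd : d'' = -31 := by omega
    subst hd
    have hc : c' = -12 - a' := by omega
    subst hc
    nlinarith [sq_nonneg (a' + 6), B2]
  · -- b'' = 31, d'' = -1
    have hd : d'' = -1 := by omega
    subst hd
    omega
  · -- b'' = -1, d'' = 31
    have hd : d'' = 31 := by omega
    subst hd
    omega
  · -- b'' = -31, d'' = 1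
    have hd : d'' = 1 := by omega
    subst hd
    have hc : c' = -12 - a' := by omega
    subst hc
    nlinarith [sq_nonneg (a' + 6), B2]
noncomputable def fZ : ℤ[X] := X ^ 4 - 24 * X ^ 3 + 152 * X ^ 2 - 352 * X - 496

lemma fZ_monic : fZ.Monic := by unfold fZ; monicity!

lemma fZ_deg : fZ.natDegree = 4 := by unfold fZ; compute_degree!

lemma root_case (g : ℤ[X]) (hg : g.Monic) (hd : g.natDegree = 1) (h : ℤ[X])
    (he : g * h = fZ) : False := by
  have hsh := hg.eq_X_add_C hd
  set r := g.coeff 0 with hr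
  have hev : eval (-r) fZ = 0 := by
    rw [← he, eval_mul, hsh]
    simp
  have : (-r)^4 - 24*(-r)^3 + 152*(-r)^2 - 352*(-r) - 496 = 0 := by
    rw [← hev]; unfold fZ; simp
  exact no_linear _ this

lemma quad_case (g h : ℤ[X]) (hg : g.Monic) (hh : h.Monic)
    (hdg : g.natDegree = 2) (hdh : h.natDegree = 2) (he : g * h = fZ) : False := by
  have hgs := deg2_shape g hg hdg
  have hhs := deg2_shape h hh hdh
  set a := g.coeff 1; set b := g.coeff 0; set c := h.coeff 1; set d := h.coeff 0
  have e1 : fZ = X ^ 4 + C (-24) * X ^ 3 + C 152 * X ^ 2 + C (-352) * X + C (-496) := by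
    unfold fZ; simp only [map_neg, map_ofNat]; ring
  have e2 : (X ^ 2 + C a * X + C b) * (X ^ 2 + C c * X + C d) =
      X ^ 4 + C (a + c) * X ^ 3 + C (b + d + a * c) * X ^ 2 + C (a * d + b * c) * X + C (b * d) := by
    simp only [C_add, C_mul]; ring
  have he' : X ^ 4 + C (-24) * X ^ 3 + C 152 * X ^ 2 + C (-352) * X + C (-496) =
      X ^ 4 + C (a + c) * X ^ 3 + C (b + d + a * c) * X ^ 2 + C (a * d + b * c) * X + C (b * d) := by
    rw [← e1, ← e2, ← he, hgs, hhs]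
  obtain ⟨h0, h1, h2, h3⟩ := coeffs_eq _ _ _ _ _ _ _ _ he'
  exact no_quad a b c d h3.symm h2.symm h1.symm h0.symm

lemma main (g h : ℤ[X]) (hg : g.Monic) (hh : h.Monic) (he : g * h = fZ) :
    g.natDegree = 0 ∨ h.natDegree = 0 := by
  by_contra hcon
  push_neg at hcon
  obtain ⟨hg1, hh1⟩ := hcon
  have hsum : g.natDegree + h.natDegree = 4 := by
    rw [← fZ_deg, ← he, natDegree_mul hg.ne_zero hh.ne_zero]
  have hlb : 1 ≤ g.natDegree := by omega
  have hub : g.natDegree ≤ 3 := by omega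
  interval_cases hgd : g.natDegree
  · exact root_case g hg hgd h he
  · exact quad_case g h hg hh hgd (by omega) he
  · exact root_case h hh (by omega) g (by rw [mul_comm]; exact he)

lemma unit_of_deg0 (g : ℤ[X]) (hu : IsUnit g.leadingCoeff) (hd : g.natDegree = 0) :
    IsUnit g := by
  rw [Polynomial.eq_C_of_natDegree_eq_zero hd]
  rw [Polynomial.isUnit_C]
  rwa [Polynomial.leadingCoeff, hd] at hu

lemma fZ_irred : Irreducible fZ := by
  constructor
  · intro hu
    have := Polynomial.natDegree_eq_zero_of_isUnit hu
    rw [fZ_deg] at this; omega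
  · intro g h he
    have hlc : g.leadingCoeff * h.leadingCoeff = 1 := by
      rw [← Polynomial.leadingCoeff_mul, ← he]; exact fZ_monic
    rcases Int.mul_eq_one_iff_eq_one_or_neg_one.mp hlc with ⟨hg1, hh1⟩ | ⟨hg1, hh1⟩
    · have hg : g.Monic := hg1
      have hh : h.Monic := hh1
      rcases main g h hg hh he.symm with h0 | h0
      · exact Or.inl (unit_of_deg0 g (by rw [hg1]; exact isUnit_one) h0)
      · exact Or.inr (unit_of_deg0 h (by rw [hh1]; exact isUnit_one) h0)
    · have hg : (-g).Monic := by
        rw [Polynomial.Monic, Polynomial.leadingCoeff_neg, hg1]; ring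
      have hh : (-h).Monic := by
        rw [Polynomial.Monic, Polynomial.leadingCoeff_neg, hh1]; ring
      have he' : (-g) * (-h) = fZ := by rw [neg_mul_neg]; exact he.symm
      rcases main (-g) (-h) hg hh he' with h0 | h0
      · rw [Polynomial.natDegree_neg] at h0
        exact Or.inl (unit_of_deg0 g (by rw [hg1]; exact isUnit_one.neg) h0)
      · rw [Polynomial.natDegree_neg] at h0
        exact Or.inr (unit_of_deg0 h (by rw [hh1]; exact isUnit_one.neg) h0)

lemma fQ_irred : Irreducible (X ^ 4 - 24 * X ^ 3 + 152 * X ^ 2 - 352 * X - 496 : ℚ[X]) := by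
  have h := (Polynomial.IsPrimitive.Int.irreducible_iff_irreducible_map_cast
    fZ_monic.isPrimitive).mp fZ_irred
  have : map (Int.castRingHom ℚ) fZ = (X ^ 4 - 24 * X ^ 3 + 152 * X ^ 2 - 352 * X - 496 : ℚ[X]) := by
    unfold fZ
    simp [Polynomial.map_sub, Polynomial.map_add, Polynomial.map_mul, Polynomial.map_pow,
      Polynomial.map_ofNat]
  rwa [this] at h


noncomputable def fC : ℂ[X] := X ^ 4 - 24 * X ^ 3 + 152 * X ^ 2 - 352 * X - 496

def fR : ℝ → ℝ := fun x => x^4 - 24*x^3 + 152*x^2 - 352*x - 496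

lemma fR_cont : Continuous fR := by unfold fR; fun_prop

lemma fR_hasDeriv (x : ℝ) : HasDerivAt fR (4*x^3 - 72*x^2 + 304*x - 352) x := by
  unfold fR
  have h2 := ((((hasDerivAt_pow 4 x).sub ((hasDerivAt_pow 3 x).const_mul 24)).add
    ((hasDerivAt_pow 2 x).const_mul 152)).sub ((hasDerivAt_id x).const_mul 352)).sub_const 496
  refine h2.congr_deriv ?_
  push_cast
  ring

lemma fR_anti : StrictAntiOn fR (Set.Iic 2) := by
  apply strictAntiOn_of_deriv_neg (convex_Iic 2) fR_cont.continuousOn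
  intro x hx
  rw [interior_Iic, Set.mem_Iio] at hx
  rw [(fR_hasDeriv x).deriv]
  have h1 : (0:ℝ) < 2 - x := by linarith
  have h2 : (0:ℝ) < (x-8)^2 - 20 := by
    nlinarith [mul_pos h1 (show (0:ℝ) < 14 - x by linarith)]
  nlinarith [mul_pos h1 h2]

lemma fR_mono : StrictMonoOn fR (Set.Ici (25/2)) := by
  apply strictMonoOn_of_deriv_pos (convex_Ici (25/2)) fR_cont.continuousOn
  intro x hx
  rw [interior_Ici, Set.mem_Ioi] at hx
  rw [(fR_hasDeriv x).deriv]
  have h1 : (0:ℝ) < x - 2 := by linarith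
  have h2 : (0:ℝ) < (x-8)^2 - 20 := by
    nlinarith [mul_pos (show (0:ℝ) < x - 25/2 by linarith) (show (0:ℝ) < x - 7/2 by linarith)]
  nlinarith [mul_pos h1 h2]

lemma fR_neg : ∀ x ∈ Set.Icc (2:ℝ) (25/2), fR x < 0 := by
  intro x ⟨hx1, hx2⟩
  unfold fR
  nlinarith [mul_nonneg (sub_nonneg.mpr hx1) (sub_nonneg.mpr hx2), sq_nonneg (x-6),
    sq_nonneg (x^2-12*x+4), mul_nonneg (mul_nonneg (sub_nonneg.mpr hx1) (sub_nonneg.mpr hx1)) (sub_nonneg.mpr hx2),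
    mul_nonneg (mul_nonneg (sub_nonneg.mpr hx2) (sub_nonneg.mpr hx2)) (sub_nonneg.mpr hx1),
    sq_nonneg (x-2), sq_nonneg (25/2 - x)]

lemma fC_monic : fC.Monic := by unfold fC; monicity!
lemma fC_deg : fC.natDegree = 4 := by unfold fC; compute_degree!

lemma fC_card_roots : Multiset.card fC.roots = 4 := by
  rw [Polynomial.splits_iff_card_roots.mp (IsAlgClosed.splits fC), fC_deg]


lemma fC_sep : fC.Separable := by
  have h := (fQ_irred.separable).map
    (f := algebraMap ℚ ℂ)
  have : map (algebraMap ℚ ℂ) (X ^ 4 - 24 * X ^ 3 + 152 * X ^ 2 - 352 * X - 496 : ℚ[X]) = fC := by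
    unfold fC
    simp [Polynomial.map_sub, Polynomial.map_mul, Polynomial.map_pow, Polynomial.map_ofNat]
  rwa [this] at h

lemma fC_eval (x : ℝ) :
    Polynomial.eval (x:ℂ) fC = ((fR x : ℝ) : ℂ) := by
  unfold fC fR
  push_cast
  simp

lemma fC_root_of_real (x : ℝ) (hx : fR x = 0) : (x:ℂ) ∈ fC.roots := by
  rw [Polynomial.mem_roots fC_monic.ne_zero]
  rw [Polynomial.IsRoot, fC_eval, hx]
  simp

lemma part2 :
    ((X ^ 4 - 24 * X ^ 3 + 152 * X ^ 2 - 352 * X - 496 : ℂ[X]).roots.filter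
        (fun z => z.im ≠ 0)).card = 2 := by
  -- real roots via IVT
  have hx1 : ∃ x1 ∈ Set.Ioo (-1:ℝ) 0, fR x1 = 0 := by
    have h := intermediate_value_Ioo' (by norm_num : (-1:ℝ) ≤ 0) (fR_cont.continuousOn)
    have h0 : (0:ℝ) ∈ Set.Ioo (fR 0) (fR (-1)) := by
      constructor <;> norm_num [fR]
    obtain ⟨x1, hmem, hval⟩ := h h0
    exact ⟨x1, hmem, hval⟩
  have hx2 : ∃ x2 ∈ Set.Ioo (25/2:ℝ) 16, fR x2 = 0 := by
    have h := intermediate_value_Ioo (by norm_num : (25/2:ℝ) ≤ 16) (fR_cont.continuousOn)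
    have h0 : (0:ℝ) ∈ Set.Ioo (fR (25/2)) (fR 16) := by
      constructor <;> norm_num [fR]
    obtain ⟨x2, hmem, hval⟩ := h h0
    exact ⟨x2, hmem, hval⟩
  obtain ⟨x1, hx1m, hx1v⟩ := hx1
  obtain ⟨x2, hx2m, hx2v⟩ := hx2
  show (fC.roots.filter (fun z => z.im ≠ 0)).card = 2
  have hnodup := Polynomial.nodup_roots fC_sep
  have hsplit := Multiset.filter_add_not (fun z : ℂ => z.im ≠ 0) fC.roots
  have hcards : (fC.roots.filter (fun z => z.im ≠ 0)).card
      + (fC.roots.filter (fun z => ¬ z.im ≠ 0)).card = 4 := by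
    rw [← Multiset.card_add, hsplit, fC_card_roots]
  set T := fC.roots.filter (fun z : ℂ => ¬ z.im ≠ 0) with hT
  -- characterize T
  have hchar : ∀ z ∈ T, z = (x1:ℂ) ∨ z = (x2:ℂ) := by
    intro z hz
    rw [hT, Multiset.mem_filter] at hz
    obtain ⟨hzr, hzim⟩ := hz
    rw [not_not] at hzim
    have hzre : z = ((z.re : ℝ) : ℂ) := by
      apply Complex.ext <;> simp [hzim]
    set r := z.re with hr
    have hroot : fR r = 0 := by
      have := (Polynomial.mem_roots fC_monic.ne_zero).mp hzr
      rw [Polynomial.IsRoot] at this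
      rw [hzre, fC_eval] at this
      exact_mod_cast this
    by_cases hr2 : r < 2
    · left
      rw [hzre]
      norm_cast
      exact fR_anti.injOn (Set.mem_Iic.mpr (le_of_lt hr2))
        (Set.mem_Iic.mpr (by linarith [hx1m.2])) (by rw [hroot, hx1v])
    · by_cases hr12 : r ≤ 25/2
      · exfalso
        have := fR_neg r ⟨by linarith, hr12⟩
        rw [hroot] at this
        exact lt_irrefl 0 this
      · right
        rw [hzre]
        norm_cast
        exact fR_mono.injOn (Set.mem_Ici.mpr (by linarith))
          (Set.mem_Ici.mpr (le_of_lt hx2m.1)) (by rw [hroot, hx2v])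
  have hne : (x1:ℂ) ≠ (x2:ℂ) := by
    intro h
    rw [Complex.ofReal_inj] at h
    linarith [hx1m.2, hx2m.1]
  have hTnodup : T.Nodup := hnodup.filter _
  have hle : T ≤ {(x1:ℂ), (x2:ℂ)} := by
    rw [Multiset.le_iff_subset hTnodup]
    intro z hz
    rcases hchar z hz with h | h <;> simp [h]
  have hge : ({(x1:ℂ), (x2:ℂ)} : Multiset ℂ) ≤ T := by
    rw [Multiset.le_iff_subset (by simp [hne])]
    intro z hz
    simp only [Multiset.insert_eq_cons, Multiset.mem_cons, Multiset.mem_singleton] at hz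
    rw [hT, Multiset.mem_filter]
    rcases hz with rfl | rfl
    · exact ⟨fC_root_of_real x1 hx1v, by simp⟩
    · exact ⟨fC_root_of_real x2 hx2v, by simp⟩
  have hTcard : T.card = 2 := by
    have h1 := Multiset.card_le_card hle
    have h2 := Multiset.card_le_card hge
    simp at h1 h2
    omega
  omega

end Stmt17Aux

theorem stmt_17 :
    Irreducible (X ^ 4 - 24 * X ^ 3 + 152 * X ^ 2 - 352 * X - 496 : ℚ[X]) ∧
    ((X ^ 4 - 24 * X ^ 3 + 152 * X ^ 2 - 352 * X - 496 : ℂ[X]).roots.filter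
        (fun z => z.im ≠ 0)).card = 2 :=
  ⟨Stmt17Aux.fQ_irred, Stmt17Aux.part2⟩
end

section
/- The polynomial p(x) = x⁸ − 24x⁷ + 156x⁶ − 424x⁵ − 186x⁴ − 424x³ + 156x² − 24x + 1 has at least one complex root on the unit circle. -/
theorem stmt_18 :
    ∃ z : ℂ, z ^ 8 - 24 * z ^ 7 + 156 * z ^ 6 - 424 * z ^ 5 - 186 * z ^ 4
      - 424 * z ^ 3 + 156 * z ^ 2 - 24 * z + 1 = 0 ∧ ‖z‖ = 1 := by
  -- h(w) = w^4 - 24 w^3 + 152 w^2 - 352 w - 496 has a root in [-2, 0]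
  set f : ℝ → ℝ := fun w => w ^ 4 - 24 * w ^ 3 + 152 * w ^ 2 - 352 * w - 496 with hf
  have hcont : ContinuousOn f (Set.Icc (-2 : ℝ) 0) := by
    apply Continuous.continuousOn; fun_prop
  have hmem : (0 : ℝ) ∈ Set.Icc (f 0) (f (-2)) := by
    simp [hf]; norm_num
  obtain ⟨w, hwmem, hw0⟩ := intermediate_value_Icc' (by norm_num : (-2:ℝ) ≤ 0) hcont hmem
  obtain ⟨hw2, hw0'⟩ := hwmem
  have hw2' : w ^ 2 ≤ 4 := by nlinarith
  set s : ℝ := Real.sqrt (4 - w ^ 2) with hs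
  have hss : s * s = 4 - w ^ 2 := Real.mul_self_sqrt (by linarith)
  -- z = w/2 + i·s/2 has |z| = 1 and z² - wz + 1 = 0
  set z : ℂ := ⟨w / 2, s / 2⟩ with hz
  have habs : ‖z‖ = 1 := by
    have : Complex.normSq z = 1 := by
      simp only [Complex.normSq_mk, hz]
      nlinarith [hss]
    rw [Complex.norm_def, this, Real.sqrt_one]
  refine ⟨z, ?_, habs⟩
  have hquad : z ^ 2 - (w : ℂ) * z + 1 = 0 := by
    rw [Complex.ext_iff]
    constructor <;>
      simp only [hz, pow_two, Complex.mul_re, Complex.mul_im, Complex.sub_re, Complex.sub_im,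
        Complex.add_re, Complex.add_im, Complex.one_re, Complex.one_im, Complex.ofReal_re,
        Complex.ofReal_im, Complex.zero_re, Complex.zero_im] <;>
      nlinarith [hss]
  have hwC : (w : ℂ) ^ 4 - 24 * (w:ℂ) ^ 3 + 152 * (w:ℂ) ^ 2 - 352 * (w:ℂ) - 496 = 0 := by
    have h0 : (w : ℝ) ^ 4 - 24 * w ^ 3 + 152 * w ^ 2 - 352 * w - 496 = 0 := hw0
    exact_mod_cast congrArg (Complex.ofReal) h0
  linear_combination
    (z ^ 6 + ((w:ℂ) - 24) * z ^ 5 + ((w:ℂ) ^ 2 - 24 * (w:ℂ) + 155) * z ^ 4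
      + ((w:ℂ) ^ 3 - 24 * (w:ℂ) ^ 2 + 154 * (w:ℂ) - 400) * z ^ 3
      + ((w:ℂ) ^ 2 - 24 * (w:ℂ) + 155) * z ^ 2 + ((w:ℂ) - 24) * z + 1) * hquad
    + z ^ 4 * hwC
end
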